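/- arXiv:2404.13642 — 4 statements merged into one kernel-verified Lean document; each statement's English description precedes it below -/
import Mathlib

section
/- Let h : ℝ² → ℝ² be a homeomorphism and x ∈ ℝ². If the positive orbit O₊(x, h) = {h^n(x) : n ≥ 0} is unbounded, then ω(x, h) is nonempty if and only if ω(x, h) is an unbounded set. -/
open Filter Topology

/-- The ω-limit set of `x` under `f`: points `y` such that `f^[nᵢ] x → y`
for some strictly increasing sequence of positive integers `nᵢ`. -/
def omegaSet {X : Type*} [TopologicalSpace X] (f : X → X) (x : X) : Set X :=
  {y | ∃ φ : ℕ → ℕ, StrictMono φ ∧ (∀ i, 0 < φ i) ∧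
    Tendsto (fun i => f^[φ i] x) atTop (𝓝 y)}

theorem stmt_3 (h : EuclideanSpace ℝ (Fin 2) ≃ₜ EuclideanSpace ℝ (Fin 2))
    (x : EuclideanSpace ℝ (Fin 2))
    (hub : ¬ Bornology.IsBounded (Set.range fun n : ℕ => (⇑h)^[n] x)) :
    (omegaSet (⇑h) x).Nonempty ↔ ¬ Bornology.IsBounded (omegaSet (⇑h) x) := by
  classical
  constructor
  · rintro ⟨y, φ, hφ, hφpos, hy⟩ hb
    -- `h` maps the omega set into itself
    have hmaps : ∀ z ∈ omegaSet (⇑h) x, h z ∈ omegaSet (⇑h) x := by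
      rintro z ⟨ψ, hψ, hψpos, hz⟩
      refine ⟨fun i => ψ i + 1, fun i j hij => by simpa using hψ hij,
        fun i => Nat.succ_pos _, ?_⟩
      have := (h.continuous.tendsto z).comp hz
      simpa [Function.comp_def, Function.iterate_succ_apply'] using this
    have hyω : y ∈ omegaSet (⇑h) x := ⟨φ, hφ, hφpos, hy⟩
    obtain ⟨r, hr⟩ := hb.subset_closedBall 0
    set R := r + 1 with hR
    have hrR : r < R := by simp [hR]
    have hsub : ∀ z ∈ omegaSet (⇑h) x, dist z 0 < R := fun z hz =>
      lt_of_le_of_lt (Metric.mem_closedBall.1 (hr hz)) hrR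
    -- the orbit enters the ball of radius R infinitely often
    have hfreqS : ∀ N : ℕ, ∃ n, N ≤ n ∧ dist ((⇑h)^[n] x) 0 < R := by
      intro N
      have hyball : Metric.ball (0 : EuclideanSpace ℝ (Fin 2)) R ∈ 𝓝 y :=
        Metric.isOpen_ball.mem_nhds (Metric.mem_ball.2 (hsub y hyω))
      have hev : ∀ᶠ i in atTop, (⇑h)^[φ i] x ∈ Metric.ball (0 : EuclideanSpace ℝ (Fin 2)) R :=
        hy.eventually_mem hyball
      obtain ⟨i0, hi0⟩ := hev.exists_forall_of_atTop
      refine ⟨φ (max N i0), le_trans (le_max_left _ _) (hφ.le_apply), ?_⟩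
      exact Metric.mem_ball.1 (hi0 (max N i0) (le_max_right _ _))
    -- the orbit escapes the ball infinitely often
    have hfreqT : ∀ N : ℕ, ∃ n, N ≤ n ∧ R ≤ dist ((⇑h)^[n] x) 0 := by
      intro N
      by_contra hcon
      push_neg at hcon
      apply hub
      have hsubr : (Set.range fun n : ℕ => (⇑h)^[n] x) ⊆
          ((fun n : ℕ => (⇑h)^[n] x) '' Set.Iio N) ∪
            Metric.closedBall (0 : EuclideanSpace ℝ (Fin 2)) R := by
        rintro _ ⟨n, rfl⟩
        rcases lt_or_ge n N with hn | hn
        · exact Or.inl ⟨n, hn, rfl⟩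
        · exact Or.inr (Metric.mem_closedBall.2 (le_of_lt (hcon n hn)))
      exact Bornology.IsBounded.subset
        ((((Set.finite_Iio N).image _).isBounded).union Metric.isBounded_closedBall) hsubr
    -- exit times occur frequently
    have hfreqE : ∃ᶠ n in atTop,
        (1 ≤ n ∧ dist ((⇑h)^[n] x) 0 < R ∧ R ≤ dist ((⇑h)^[n+1] x) 0) := by
      rw [Filter.frequently_atTop]
      intro N
      obtain ⟨n, hnN, hn⟩ := hfreqS (N + 1)
      obtain ⟨m, hmn, hm⟩ := hfreqT (n + 1)
      set P : ℕ → Prop := fun k => n ≤ k ∧ dist ((⇑h)^[k] x) 0 < R with hP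
      have hPn : P n := ⟨le_rfl, hn⟩
      have hnm : n ≤ m := le_trans (Nat.le_succ n) hmn
      set k := Nat.findGreatest P m with hk
      have hPk : P k := Nat.findGreatest_spec hnm hPn
      have hkm : k ≤ m := Nat.findGreatest_le m
      have hkm' : k + 1 ≤ m := by
        rcases lt_or_eq_of_le hkm with hlt | heq
        · exact hlt
        · exfalso; rw [heq] at hPk; exact absurd hPk.2 (not_lt.2 hm)
      have hexit : R ≤ dist ((⇑h)^[k+1] x) 0 := by
        by_cases hc : k + 1 = m
        · rw [hc]; exact hm
        · by_contra hlt
          push_neg at hlt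
          have : k + 1 ≤ k :=
            Nat.le_findGreatest hkm' ⟨le_trans hPk.1 (Nat.le_succ k), hlt⟩
          omega
      have hNk : N ≤ k := le_trans (le_trans (Nat.le_succ N) hnN) hPk.1
      exact ⟨k, hNk, le_trans (le_trans (Nat.one_le_iff_ne_zero.2 (by omega)) le_rfl)
        le_rfl, hPk.2, hexit⟩
    obtain ⟨ψ, hψmono, hψ⟩ := Filter.extraction_of_frequently_atTop hfreqE
    have hmem : ∀ i, (⇑h)^[ψ i] x ∈ Metric.closedBall (0 : EuclideanSpace ℝ (Fin 2)) R :=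
      fun i => Metric.mem_closedBall.2 (le_of_lt (hψ i).2.1)
    obtain ⟨z, _, σ, hσ, hconv⟩ :=
      (isCompact_closedBall (0 : EuclideanSpace ℝ (Fin 2)) R).tendsto_subseq hmem
    have hzω : z ∈ omegaSet (⇑h) x :=
      ⟨ψ ∘ σ, hψmono.comp hσ, fun i => lt_of_lt_of_le Nat.zero_lt_one (hψ (σ i)).1,
        by simpa [Function.comp_def] using hconv⟩
    have hhzω : h z ∈ omegaSet (⇑h) x := hmaps z hzω
    have hlt : dist (h z) 0 < R := hsub _ hhzω
    have htend : Tendsto (fun i => (⇑h)^[ψ (σ i) + 1] x) atTop (𝓝 (h z)) := by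
      have := (h.continuous.tendsto z).comp hconv
      simpa [Function.comp_def, Function.iterate_succ_apply'] using this
    have hge : R ≤ dist (h z) 0 := by
      have hd : Tendsto (fun i => dist ((⇑h)^[ψ (σ i) + 1] x) 0) atTop (𝓝 (dist (h z) 0)) :=
        htend.dist tendsto_const_nhds
      exact ge_of_tendsto' hd (fun i => (hψ (σ i)).2.2)
    linarith
  · intro hub'
    rcases Set.eq_empty_or_nonempty (omegaSet (⇑h) x) with he | hne
    · exact absurd (he ▸ Bornology.isBounded_empty) hub'
    · exact hne
end

section
/- Let h : ℝ² → ℝ² be a homeomorphism and x ∈ ℝ². If the ω-limit set ω(x, h) is a nonempty bounded set, then the positive orbit O₊(x, h) = {h^n(x) : n ≥ 0} is bounded. -/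
open Filter Topology

theorem stmt_4 (h : EuclideanSpace ℝ (Fin 2) ≃ₜ EuclideanSpace ℝ (Fin 2))
    (x : EuclideanSpace ℝ (Fin 2))
    (hne : (omegaSet (⇑h) x).Nonempty)
    (hbd : Bornology.IsBounded (omegaSet (⇑h) x)) :
    Bornology.IsBounded (Set.range fun n : ℕ => (⇑h)^[n] x) := by
  classical
  by_contra hub
  obtain ⟨R, hR⟩ := hbd.subset_closedBall 0
  obtain ⟨y, φ₀, hφ₀, hφ₀pos, hy⟩ := hne
  have hyω : y ∈ omegaSet (⇑h) x := ⟨φ₀, hφ₀, hφ₀pos, hy⟩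
  have hyR : ‖y‖ ≤ R := by
    have := hR hyω
    simpa [Metric.mem_closedBall, dist_zero_right] using this
  -- bound on the image of the closed ball of radius R+1
  have hcomp : IsCompact (⇑h '' Metric.closedBall 0 (R + 1)) :=
    (isCompact_closedBall (0 : EuclideanSpace ℝ (Fin 2)) (R + 1)).image h.continuous
  obtain ⟨M₀, hM₀⟩ := hcomp.isBounded.subset_closedBall 0
  set M : ℝ := max M₀ (R + 1) with hMdef
  have hMR : R + 1 ≤ M := le_max_right _ _
  have himg : ∀ z : EuclideanSpace ℝ (Fin 2), ‖z‖ ≤ R + 1 → ‖h z‖ ≤ M := by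
    intro z hz
    have hzmem : z ∈ Metric.closedBall (0 : EuclideanSpace ℝ (Fin 2)) (R + 1) := by
      simpa [Metric.mem_closedBall, dist_zero_right] using hz
    have := hM₀ ⟨z, hzmem, rfl⟩
    have h1 : ‖h z‖ ≤ M₀ := by
      simpa [Metric.mem_closedBall, dist_zero_right] using this
    exact h1.trans (le_max_left _ _)
  -- the orbit frequently enters the ball of radius R+1
  have hnear : ∃ᶠ n in atTop, ‖(⇑h)^[n] x‖ < R + 1 := by
    have hev : ∀ᶠ i in atTop, ‖(⇑h)^[φ₀ i] x‖ < R + 1 := by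
      have hball : Metric.ball (0 : EuclideanSpace ℝ (Fin 2)) (R + 1) ∈ 𝓝 y := by
        apply Metric.isOpen_ball.mem_nhds
        simpa [Metric.mem_ball, dist_zero_right] using lt_of_le_of_lt hyR (by linarith)
      filter_upwards [hy hball] with i hi
      simpa [Metric.mem_ball, dist_zero_right] using hi
    exact (hφ₀.tendsto_atTop).frequently hev.frequently
  -- the orbit is unbounded in norm
  have hfar : ∀ K : ℝ, ∃ n : ℕ, K < ‖(⇑h)^[n] x‖ := by
    intro K
    by_contra hK
    push_neg at hK
    apply hub
    apply Bornology.IsBounded.subset (Metric.isBounded_closedBall (x := (0 : EuclideanSpace ℝ (Fin 2))) (r := K))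
    rintro _ ⟨n, rfl⟩
    simpa [Metric.mem_closedBall, dist_zero_right] using hK n
  -- frequently the orbit is in the annulus
  have hQ : ∃ᶠ n in atTop, 1 ≤ n ∧ R + 1 ≤ ‖(⇑h)^[n] x‖ ∧ ‖(⇑h)^[n] x‖ ≤ M := by
    rw [frequently_atTop]
    intro N
    obtain ⟨p, hpN, hpnear⟩ := (frequently_atTop.mp hnear) N
    have hboundall : ∀ r : ℕ, ∃ C : ℝ, ∀ m ≤ r, ‖(⇑h)^[m] x‖ ≤ C := by
      intro r
      induction r with
      | zero => exact ⟨‖(⇑h)^[0] x‖, fun m hm => by simp_all⟩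
      | succ k ih =>
        obtain ⟨C, hC⟩ := ih
        refine ⟨max C ‖(⇑h)^[k + 1] x‖, fun m hm => ?_⟩
        rcases Nat.lt_succ_iff_lt_or_eq.mp (Nat.lt_succ_of_le hm) with hlt | heq
        · exact (hC m (Nat.lt_succ_iff.mp hlt)).trans (le_max_left _ _)
        · subst heq; exact le_max_right _ _
    obtain ⟨C, hC⟩ := hboundall p
    obtain ⟨q, hq⟩ := hfar (max M C)
    have hqM : M < ‖(⇑h)^[q] x‖ := lt_of_le_of_lt (le_max_left _ _) hq
    have hpq : p < q := by
      by_contra hle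
      push_neg at hle
      have h1 := hC q hle
      have h2 : C ≤ max M C := le_max_right M C
      have h3 : max M C < ‖(⇑h)^[q] x‖ := hq
      linarith
    set P : ℕ → Prop := fun m => ‖(⇑h)^[m] x‖ ≤ R + 1 with hPdef
    set n := Nat.findGreatest P q with hndef
    have hPp : P p := hpnear.le
    have hpn : p ≤ n := Nat.le_findGreatest hpq.le hPp
    have hPn : P n := Nat.findGreatest_spec hpq.le hPp
    have hnq : n ≤ q := Nat.findGreatest_le q
    have hPqfalse : ¬ P q := by
      simp only [hPdef]
      push_neg
      linarith
    have hnq' : n < q := lt_of_le_of_ne hnq (fun e => hPqfalse (e ▸ hPn))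
    have hsucc : ‖(⇑h)^[n + 1] x‖ ≤ M := by
      rw [Function.iterate_succ_apply']
      exact himg _ hPn
    have hnq'' : n + 1 < q := by
      rcases lt_or_eq_of_le (Nat.succ_le_of_lt hnq') with hlt | heq
      · exact hlt
      · exfalso
        rw [← heq] at hqM
        simp only [Nat.succ_eq_add_one] at hqM
        linarith
    have hnotP : ¬ P (n + 1) :=
      Nat.findGreatest_is_greatest (by omega) hnq''.le
    have hgt : R + 1 < ‖(⇑h)^[n + 1] x‖ := by
      simp only [hPdef] at hnotP
      push_neg at hnotP
      exact hnotP
    exact ⟨n + 1, by omega, by omega, hgt.le, hsucc⟩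
  obtain ⟨φ, hφ, hQφ⟩ := extraction_of_frequently_atTop hQ
  -- the annulus is compact
  set A : Set (EuclideanSpace ℝ (Fin 2)) :=
    Metric.closedBall 0 M ∩ {z | R + 1 ≤ ‖z‖} with hAdef
  have hAcomp : IsCompact A := by
    apply (isCompact_closedBall (0 : EuclideanSpace ℝ (Fin 2)) M).inter_right
    have : {z : EuclideanSpace ℝ (Fin 2) | R + 1 ≤ ‖z‖} =
        (Metric.ball (0 : EuclideanSpace ℝ (Fin 2)) (R + 1))ᶜ := by
      ext z
      simp [Metric.mem_ball, dist_zero_right, not_lt]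
    rw [this]
    exact Metric.isOpen_ball.isClosed_compl
  have huA : ∀ i, (⇑h)^[φ i] x ∈ A := by
    intro i
    obtain ⟨h1, h2, h3⟩ := hQφ i
    exact ⟨by simpa [Metric.mem_closedBall, dist_zero_right] using h3, h2⟩
  obtain ⟨z, hzA, ψ, hψ, hztend⟩ := hAcomp.tendsto_subseq huA
  have hzω : z ∈ omegaSet (⇑h) x :=
    ⟨φ ∘ ψ, hφ.comp hψ, fun i => (hQφ (ψ i)).1, hztend⟩
  have hz1 : ‖z‖ ≤ R := by
    have := hR hzω
    simpa [Metric.mem_closedBall, dist_zero_right] using this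
  have hz2 : R + 1 ≤ ‖z‖ := hzA.2
  linarith
end

section
/- Let J = [-1, 1] and let f : J² → J² be a normally rising homeomorphism. Then for every (r, s) ∈ (-1, 1)², the ω-limit set ω((r, s), f) is a nonempty connected closed subset of J × {1}, and the α-limit set α((r, s), f) is a nonempty connected closed subset of J × {-1}. -/
open Filter Topology

/-- The piecewise homeomorphism `f₀₁` of `[-1,1]`. -/
noncomputable def f01 (s : ℝ) : ℝ :=
  if 0 ≤ s then (s + 1) / 2 else if -1/2 ≤ s then s + 1/2 else 2 * s + 1

/-- The interval `J = [-1,1]` as a subtype. -/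
abbrev Jt : Type := ↥(Set.Icc (-1 : ℝ) 1)

/-- The square `J²`. -/
abbrev Sq : Type := Jt × Jt

/-- A homeomorphism of the square `J²` is normally rising if it agrees with
`f₀₂ : (r,s) ↦ (r, f₀₁ s)` on the boundary `∂J²`, and maps each horizontal
segment `J_s = J × {s}` onto `f₀₂(J_s) = J × {f₀₁ s}`. -/
def NormallyRising (f : Sq ≃ₜ Sq) : Prop :=
  (∀ x : Sq, ((x.1 : ℝ) = -1 ∨ (x.1 : ℝ) = 1 ∨ (x.2 : ℝ) = -1 ∨ (x.2 : ℝ) = 1) →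
    ((f x).1 : ℝ) = (x.1 : ℝ) ∧ ((f x).2 : ℝ) = f01 (x.2 : ℝ)) ∧
  (∀ s : Jt, (fun x : Sq => f x) '' {x : Sq | x.2 = s} =
    {x : Sq | (x.2 : ℝ) = f01 (s : ℝ)})

/-!
The height `s` of a point only evolves under the one-dimensional map `f₀₁`, which moves every
point of `(-1, 1)` upwards and fixes exactly `±1`. Hence the heights along a forward orbit increase
to `1` and along a backward orbit decrease to `-1`, so the ω- and α-limit sets lie in the top and
bottom edges, where `f` is the identity. An orbit of a continuous map whose limit points are all
fixed moves by steps tending to `0`, and in a compact metric space the limit set of such a sequence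
is connected: a Urysohn function separating two clopen pieces of it would have to take values
strictly between them infinitely often.
-/

open Set Function

section ClusterSet

variable {X : Type*}

lemma omegaSet_eq_setOf_mapClusterPt [TopologicalSpace X] [FirstCountableTopology X]
    (f : X → X) (x : X) :
    omegaSet f x = {y | MapClusterPt y atTop (fun n => f^[n] x)} := by
  ext y
  constructor
  · rintro ⟨φ, hφ, -, hlim⟩
    refine mapClusterPt_iff_frequently.2 fun s hs => frequently_atTop.2 fun N => ?_
    obtain ⟨i, hiN, his⟩ := ((eventually_ge_atTop N).and (hlim.eventually_mem hs)).exists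
    exact ⟨φ i, hiN.trans hφ.le_apply, his⟩
  · intro hy
    obtain ⟨ψ, hψ, hlim⟩ := hy.tendsto_subseq
    refine ⟨fun i => ψ (i + 1), hψ.comp (strictMono_id.add_const 1), fun i => ?_,
      hlim.comp (tendsto_add_atTop_nat 1)⟩
    exact Nat.lt_of_lt_of_le i.succ_pos hψ.le_apply

lemma isClosed_omegaSet [TopologicalSpace X] [FirstCountableTopology X]
    (f : X → X) (x : X) : IsClosed (omegaSet f x) := by
  rw [omegaSet_eq_setOf_mapClusterPt]
  exact isClosed_setOfPred_clusterPt

lemma omegaSet_nonempty [TopologicalSpace X] [FirstCountableTopology X]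
    [CompactSpace X] (f : X → X) (x : X) : (omegaSet f x).Nonempty := by
  rw [omegaSet_eq_setOf_mapClusterPt]
  obtain ⟨y, -, hy⟩ := isCompact_univ.exists_mapClusterPt_of_frequently
    (show ∃ᶠ n in atTop, f^[n] x ∈ univ from Frequently.of_forall fun n => mem_univ _)
  exact ⟨y, hy⟩

lemma omegaSet_subset_preimage_of_tendsto {Y : Type*} [TopologicalSpace X]
    [FirstCountableTopology X] [TopologicalSpace Y] [T2Space Y] {f : X → X} {x : X}
    {π : X → Y} (hπ : Continuous π) {c : Y}
    (hc : Tendsto (fun n => π (f^[n] x)) atTop (𝓝 c)) :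
    omegaSet f x ⊆ π ⁻¹' {c} := by
  rw [omegaSet_eq_setOf_mapClusterPt]
  intro y hy
  have hπy : MapClusterPt (π y) atTop (fun n => π (f^[n] x)) :=
    hy.tendsto_comp (hπ.tendsto y)
  exact eq_of_nhds_neBot (ClusterPt.mono hπy hc).neBot

/-- A discrete intermediate value theorem. -/
lemma frequently_mem_Icc_of_tendsto_dist_succ {g : ℕ → ℝ} {a b : ℝ} (hab : a < b)
    (hstep : Tendsto (fun n => dist (g (n + 1)) (g n)) atTop (𝓝 0))
    (hlow : ∃ᶠ n in atTop, g n < a) (hhigh : ∃ᶠ n in atTop, b < g n) :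
    ∃ᶠ n in atTop, g n ∈ Icc a b := by
  by_contra hnot
  obtain ⟨N, hN⟩ := eventually_atTop.1
    ((not_frequently.1 hnot).and (hstep.eventually (gt_mem_nhds (sub_pos.2 hab))))
  obtain ⟨n₀, hn₀N, hn₀⟩ := frequently_atTop.1 hlow N
  -- steps shorter than `b - a` cannot jump over `Icc a b`
  have hstay : ∀ n, n₀ ≤ n → g n < a := by
    intro n hn
    induction n, hn using Nat.le_induction with
    | base => exact hn₀
    | succ n hn ih =>
      have hsmall := (hN n (by omega)).2
      rw [Real.dist_eq, abs_sub_lt_iff] at hsmall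
      have hout := (hN (n + 1) (by omega)).1
      simp only [mem_Icc, not_and_or, not_le] at hout
      rcases hout with h | h <;> linarith
  obtain ⟨n, hn, hbn⟩ := frequently_atTop.1 hhigh n₀
  linarith [hstay n hn]

lemma isPreconnected_setOf_mapClusterPt [PseudoMetricSpace X] [CompactSpace X]
    {u : ℕ → X} (hstep : Tendsto (fun n => dist (u (n + 1)) (u n)) atTop (𝓝 0)) :
    IsPreconnected {y | MapClusterPt y atTop u} := by
  set K := {y | MapClusterPt y atTop u}
  have hK : IsClosed K := isClosed_setOfPred_clusterPt
  rw [isPreconnected_closed_iff]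
  rintro s t hs ht hKst ⟨p, hpK, hps⟩ ⟨q, hqK, hqt⟩
  by_contra hdisj
  obtain ⟨g, hg₀, hg₁, -⟩ :=
    exists_continuous_zero_one_of_isClosed (hK.inter hs) (hK.inter ht) <|
      disjoint_left.2 fun y hy hy' => hdisj ⟨y, hy.1, hy.2, hy'.2⟩
  have hgstep : Tendsto (fun n => dist (g (u (n + 1))) (g (u n))) atTop (𝓝 0) :=
    tendsto_uniformity_iff_dist_tendsto_zero.1 <|
      Tendsto.comp (CompactSpace.uniformContinuous_of_continuous g.continuous)
        (tendsto_uniformity_iff_dist_tendsto_zero (f := fun n => (u (n + 1), u n)).2 hstep)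
  have hnear : ∀ y ∈ K, ∀ U ∈ 𝓝 (g y), ∃ᶠ n in atTop, g (u n) ∈ U := fun y hy =>
    mapClusterPt_iff_frequently.1 (hy.tendsto_comp (g.continuous.tendsto y))
  have hlow : ∃ᶠ n in atTop, g (u n) < 1 / 3 :=
    hnear p hpK _ (Iio_mem_nhds (by rw [hg₀ ⟨hpK, hps⟩]; norm_num))
  have hhigh : ∃ᶠ n in atTop, 2 / 3 < g (u n) :=
    hnear q hqK _ (Ioi_mem_nhds (by rw [hg₁ ⟨hqK, hqt⟩]; norm_num))
  obtain ⟨y, ⟨hy₁, hy₂⟩, hyK⟩ :=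
    (isClosed_Icc.preimage g.continuous).isCompact.exists_mapClusterPt_of_frequently
      (frequently_mem_Icc_of_tendsto_dist_succ (by norm_num) hgstep hlow hhigh)
  have hgy : g y = 0 ∨ g y = 1 :=
    (hKst hyK).imp (fun hy => hg₀ ⟨hyK, hy⟩) fun hy => hg₁ ⟨hyK, hy⟩
  rcases hgy with h | h <;> linarith

lemma tendsto_dist_iterate_succ_of_omegaSet_subset [PseudoMetricSpace X]
    [CompactSpace X] {f : X → X} (hf : Continuous f) {x : X}
    (hfix : omegaSet f x ⊆ fixedPoints f) :
    Tendsto (fun n => dist (f^[n + 1] x) (f^[n] x)) atTop (𝓝 0) := by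
  rw [omegaSet_eq_setOf_mapClusterPt] at hfix
  have hF : Continuous fun y => dist (f y) y := hf.dist continuous_id
  refine tendsto_order.2 ⟨fun ε hε => Eventually.of_forall fun n => hε.trans_le dist_nonneg,
    fun ε hε => ?_⟩
  by_contra hnot
  have hfreq : ∃ᶠ n in atTop, f^[n] x ∈ {y | ε ≤ dist (f y) y} :=
    (not_eventually.1 hnot).mono fun n hn => by
      rw [iterate_succ_apply', not_lt] at hn
      exact hn
  obtain ⟨y, hyε, hy⟩ :=
    ((isClosed_le continuous_const hF).isCompact).exists_mapClusterPt_of_frequently hfreq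
  have hyε' : ε ≤ dist (f y) y := hyε
  rw [show f y = y from hfix hy, dist_self] at hyε'
  linarith

lemma isConnected_omegaSet [PseudoMetricSpace X] [CompactSpace X] {f : X → X}
    (hf : Continuous f) {x : X} (hfix : omegaSet f x ⊆ fixedPoints f) :
    IsConnected (omegaSet f x) := by
  refine ⟨omegaSet_nonempty f x, ?_⟩
  have hstep := tendsto_dist_iterate_succ_of_omegaSet_subset hf hfix
  rw [omegaSet_eq_setOf_mapClusterPt]
  exact isPreconnected_setOf_mapClusterPt hstep

end ClusterSet

section F01

lemma continuous_f01 : Continuous f01 := by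
  unfold f01
  apply Continuous.if_le (by fun_prop) _ continuous_const continuous_id
  · rintro x (rfl : 0 = x); norm_num
  apply Continuous.if_le (by fun_prop) (by fun_prop) continuous_const continuous_id
  rintro x (rfl : -1 / 2 = x); norm_num

lemma le_f01 {t : ℝ} (h : t ∈ Icc (-1 : ℝ) 1) : t ≤ f01 t := by
  unfold f01; split_ifs <;> linarith [h.1, h.2]

lemma f01_eq_self_iff {t : ℝ} : f01 t = t ↔ t = -1 ∨ t = 1 := by
  constructor
  · intro ht
    unfold f01 at ht
    split_ifs at ht <;> [right; left; left] <;> linarith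
  · rintro (rfl | rfl) <;> norm_num [f01]

lemma f01_eq_of_tendsto {a a' : ℕ → ℝ} {L : ℝ} (ha : Tendsto a atTop (𝓝 L))
    (ha' : Tendsto a' atTop (𝓝 L)) (hrec : ∀ n, a n = f01 (a' n)) : f01 L = L :=
  tendsto_nhds_unique (((continuous_f01.tendsto L).comp ha').congr fun n => (hrec n).symm) ha

lemma tendsto_one_of_succ_eq_f01 {a : ℕ → ℝ} (ha : ∀ n, a n ∈ Icc (-1 : ℝ) 1)
    (hrec : ∀ n, a (n + 1) = f01 (a n)) (h₀ : -1 < a 0) : Tendsto a atTop (𝓝 1) := by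
  have hmono : Monotone a := monotone_nat_of_le_succ fun n => (hrec n) ▸ le_f01 (ha n)
  have hbdd : BddAbove (range a) := ⟨1, by rintro _ ⟨n, rfl⟩; exact (ha n).2⟩
  have hlim := tendsto_atTop_ciSup hmono hbdd
  have hfix := f01_eq_of_tendsto (hlim.comp (tendsto_add_atTop_nat 1)) hlim hrec
  have hL₀ : a 0 ≤ ⨆ n, a n := le_ciSup hbdd 0
  rcases f01_eq_self_iff.1 hfix with h | h
  · linarith
  · rwa [h] at hlim

lemma tendsto_neg_one_of_eq_f01_succ {a : ℕ → ℝ} (ha : ∀ n, a n ∈ Icc (-1 : ℝ) 1)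
    (hrec : ∀ n, a n = f01 (a (n + 1))) (h₀ : a 0 < 1) : Tendsto a atTop (𝓝 (-1)) := by
  have hanti : Antitone a := antitone_nat_of_succ_le fun n => (hrec n) ▸ le_f01 (ha (n + 1))
  have hbdd : BddBelow (range a) := ⟨-1, by rintro _ ⟨n, rfl⟩; exact (ha n).1⟩
  have hlim := tendsto_atTop_ciInf hanti hbdd
  have hfix := f01_eq_of_tendsto hlim (hlim.comp (tendsto_add_atTop_nat 1)) hrec
  have hL₀ : ⨅ n, a n ≤ a 0 := ciInf_le hbdd 0
  rcases f01_eq_self_iff.1 hfix with h | h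
  · rwa [h] at hlim
  · linarith

end F01

namespace NormallyRising

variable {f : Sq ≃ₜ Sq} (hf : NormallyRising f)
include hf

lemma snd_apply (x : Sq) : ((f x).2 : ℝ) = f01 (x.2 : ℝ) := by
  have hx : f x ∈ (fun z : Sq => f z) '' {z : Sq | z.2 = x.2} := ⟨x, rfl, rfl⟩
  rwa [hf.2 x.2] at hx

lemma apply_eq_self_of_snd_eq {y : Sq} {c : ℝ} (hc : c = -1 ∨ c = 1) (hy : (y.2 : ℝ) = c) :
    f y = y := by
  obtain ⟨h₁, h₂⟩ := hf.1 y (by rcases hc with rfl | rfl <;> simp [hy])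
  exact Prod.ext (Subtype.ext h₁) (Subtype.ext (by rw [h₂, hy, f01_eq_self_iff.2 hc]))

lemma tendsto_snd_iterate (x : Sq) (hx : -1 < (x.2 : ℝ)) :
    Tendsto (fun n => ((f^[n] x).2 : ℝ)) atTop (𝓝 1) :=
  tendsto_one_of_succ_eq_f01 (fun n => (f^[n] x).2.2)
    (fun n => by rw [iterate_succ_apply']; exact hf.snd_apply _) hx

lemma tendsto_snd_iterate_symm (x : Sq) (hx : (x.2 : ℝ) < 1) :
    Tendsto (fun n => ((f.symm^[n] x).2 : ℝ)) atTop (𝓝 (-1)) :=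
  tendsto_neg_one_of_eq_f01_succ (fun n => (f.symm^[n] x).2.2)
    (fun n => by rw [iterate_succ_apply', ← hf.snd_apply, f.apply_symm_apply]) hx

end NormallyRising

theorem stmt_11_general (f : Sq ≃ₜ Sq) (hf : NormallyRising f)
    (r s : Jt) (hs : (s : ℝ) ∈ Set.Ioo (-1 : ℝ) 1) :
    ((omegaSet (⇑f) (r, s)).Nonempty ∧ IsConnected (omegaSet (⇑f) (r, s)) ∧
      IsClosed (omegaSet (⇑f) (r, s)) ∧
      omegaSet (⇑f) (r, s) ⊆ {x : Sq | (x.2 : ℝ) = 1}) ∧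
    ((omegaSet (⇑f.symm) (r, s)).Nonempty ∧ IsConnected (omegaSet (⇑f.symm) (r, s)) ∧
      IsClosed (omegaSet (⇑f.symm) (r, s)) ∧
      omegaSet (⇑f.symm) (r, s) ⊆ {x : Sq | (x.2 : ℝ) = -1}) := by
  have hπ : Continuous fun y : Sq => (y.2 : ℝ) := by fun_prop
  have hω := omegaSet_subset_preimage_of_tendsto hπ (hf.tendsto_snd_iterate (r, s) hs.1)
  have hα := omegaSet_subset_preimage_of_tendsto hπ (hf.tendsto_snd_iterate_symm (r, s) hs.2)
  have hωfix : omegaSet f (r, s) ⊆ fixedPoints f := fun y hy =>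
    hf.apply_eq_self_of_snd_eq (Or.inr rfl) (hω hy)
  have hαfix : omegaSet f.symm (r, s) ⊆ fixedPoints f.symm := fun y hy =>
    f.symm_apply_eq.2 (hf.apply_eq_self_of_snd_eq (Or.inl rfl) (hα hy)).symm
  exact ⟨⟨omegaSet_nonempty _ _, isConnected_omegaSet f.continuous hωfix,
      isClosed_omegaSet _ _, hω⟩,
    ⟨omegaSet_nonempty _ _, isConnected_omegaSet f.symm.continuous hαfix,
      isClosed_omegaSet _ _, hα⟩⟩

theorem stmt_11 (f : Sq ≃ₜ Sq) (hf : NormallyRising f)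
    (r s : Jt) (hr : (r : ℝ) ∈ Set.Ioo (-1 : ℝ) 1) (hs : (s : ℝ) ∈ Set.Ioo (-1 : ℝ) 1) :
    ((omegaSet (⇑f) (r, s)).Nonempty ∧ IsConnected (omegaSet (⇑f) (r, s)) ∧
      IsClosed (omegaSet (⇑f) (r, s)) ∧
      omegaSet (⇑f) (r, s) ⊆ {x : Sq | (x.2 : ℝ) = 1}) ∧
    ((omegaSet (⇑f.symm) (r, s)).Nonempty ∧ IsConnected (omegaSet (⇑f.symm) (r, s)) ∧
      IsClosed (omegaSet (⇑f.symm) (r, s)) ∧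
      omegaSet (⇑f.symm) (r, s) ⊆ {x : Sq | (x.2 : ℝ) = -1}) :=
  stmt_11_general f hf r s hs
end

section
/- Let f : [-1,1]² → [-1,1]² be a normally rising homeomorphism and fix s ∈ (-1, 1). Define ω_{sf}(r) = ω((r, s), f) for r ∈ [-1,1]. Then ω_{sf} is increasing and endpoint preserving: writing ω_{sf}(r) = [ξ₁(r), ξ₂(r)] × {1}, both ξ₁ and ξ₂ are monotone nondecreasing functions of r, and ω_{sf}(-1) = {(-1, 1)}, ω_{sf}(1) = {(1, 1)}. -/
open Filter Topology

lemma f01_one : f01 1 = 1 := by norm_num [f01]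

lemma le_f01_s19 {t : ℝ} (h1 : -1 ≤ t) (h2 : t ≤ 1) : t ≤ f01 t := by
  unfold f01; split_ifs <;> linarith

lemma f01_le_one {t : ℝ} (h2 : t ≤ 1) : f01 t ≤ 1 := by
  unfold f01; split_ifs <;> linarith

lemma neg_one_lt_f01 {t : ℝ} (h1 : -1 < t) : -1 < f01 t := by
  unfold f01; split_ifs <;> linarith

/-- iterates of `f01` tend to `1` from any starting point in `(-1,1]`. -/
lemma f01_iter_tendsto {s : ℝ} (h1 : -1 < s) (h2 : s ≤ 1) :
    Tendsto (fun n => f01^[n] s) atTop (𝓝 1) := by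
  set a : ℕ → ℝ := fun n => f01^[n] s with ha
  have hmem : ∀ n, -1 < a n ∧ a n ≤ 1 := by
    intro n
    induction n with
    | zero => exact ⟨h1, h2⟩
    | succ n ih =>
      have : a (n+1) = f01 (a n) := Function.iterate_succ_apply' f01 n s
      rw [this]
      exact ⟨neg_one_lt_f01 ih.1, f01_le_one ih.2⟩
  have hmono : Monotone a := by
    apply monotone_nat_of_le_succ
    intro n
    have : a (n+1) = f01 (a n) := Function.iterate_succ_apply' f01 n s
    rw [this]
    exact le_f01_s19 (hmem n).1.le (hmem n).2
  have hge : ∀ n, s ≤ a n := fun n => hmono (Nat.zero_le n)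
  rw [Metric.tendsto_atTop]
  intro ε hε
  have key : ∃ N, 1 - ε < a N := by
    by_contra h
    push_neg at h
    set c : ℝ := min (min (ε/2) (1/2)) (1+s) with hc
    have hcpos : 0 < c := by
      apply lt_min (lt_min (by linarith) (by norm_num)) (by linarith)
    have hstep : ∀ n, a n + c ≤ a (n+1) := by
      intro n
      have h1' := (hmem n).1
      have h2' := h n
      have : a (n+1) = f01 (a n) := Function.iterate_succ_apply' f01 n s
      rw [this]
      have hc1 : c ≤ ε/2 := (min_le_left _ _).trans (min_le_left _ _)
      have hc2 : c ≤ 1/2 := (min_le_left _ _).trans (min_le_right _ _)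
      have hc3 : c ≤ 1 + s := min_le_right _ _
      have hgn := hge n
      unfold f01; split_ifs <;> linarith
    have hgrow : ∀ n, s + n * c ≤ a n := by
      intro n
      induction n with
      | zero => simpa using hge 0
      | succ n ih =>
        have := hstep n
        push_cast
        push_cast at ih
        linarith
    obtain ⟨n, hn⟩ := exists_nat_gt ((1 - s)/c)
    have h3 := hgrow n
    have h4 := h n
    have h5 : (1 - s) < n * c := (div_lt_iff₀ hcpos).mp hn
    linarith
  obtain ⟨N, hN⟩ := key
  refine ⟨N, fun n hn => ?_⟩
  have h6 : a N ≤ a n := hmono hn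
  have h7 := (hmem n).2
  rw [Real.dist_eq, abs_lt]
  constructor <;> linarith

/-- A bounded real sequence with vanishing steps frequently visits every
point between its liminf and limsup. -/
lemma freq_near {x : ℕ → ℝ}
    (hb : ∀ n, x n ∈ Set.Icc (-1:ℝ) 1)
    (hstep : ∀ ε > (0:ℝ), ∀ᶠ n in atTop, |x (n+1) - x n| < ε)
    {a : ℝ} (h1 : liminf x atTop ≤ a) (h2 : a ≤ limsup x atTop)
    {ε : ℝ} (hε : 0 < ε) : ∃ᶠ n in atTop, |x n - a| < ε := by
  have hbdd : IsBoundedUnder (· ≤ ·) atTop x :=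
    isBoundedUnder_of ⟨1, fun n => (hb n).2⟩
  have hbdd' : IsBoundedUnder (· ≥ ·) atTop x :=
    isBoundedUnder_of ⟨-1, fun n => (hb n).1⟩
  have hfr1 : ∃ᶠ n in atTop, x n < a + ε :=
    frequently_lt_of_liminf_lt hbdd.isCoboundedUnder_ge (by linarith)
  have hfr2 : ∃ᶠ n in atTop, a - ε < x n :=
    frequently_lt_of_lt_limsup hbdd'.isCoboundedUnder_le (by linarith)
  by_contra hcon
  rw [not_frequently] at hcon
  obtain ⟨N, hN⟩ := eventually_atTop.mp ((hstep ε hε).and hcon)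
  have hNnot : ε ≤ |x N - a| := not_lt.mp (hN N le_rfl).2
  rw [le_abs] at hNnot
  rcases hNnot with hup | hdown
  · -- x stays ≥ a + ε from N on
    have claim : ∀ k, a + ε ≤ x (N + k) := by
      intro k
      induction k with
      | zero => simpa using (by linarith : a + ε ≤ x N)
      | succ k ih =>
        have h' := hN (N+k) (by omega)
        have hd : |x (N+k+1) - x (N+k)| < ε := h'.1
        have h'' := hN (N+k+1) (by omega)
        have hgt : a < x (N+k+1) := by
          rw [abs_lt] at hd
          linarith [hd.1]
        have hfar : ε ≤ |x (N+k+1) - a| := not_lt.mp h''.2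
        rw [le_abs] at hfar
        rcases hfar with h3 | h3
        · have : N + (k+1) = N + k + 1 := by omega
          rw [this]; linarith
        · linarith
    obtain ⟨n, hn1, hn2⟩ := (hfr1.and_eventually (eventually_ge_atTop N)).exists
    have := claim (n - N)
    rw [Nat.add_sub_cancel' hn2] at this
    linarith
  · -- x stays ≤ a - ε from N on
    have claim : ∀ k, x (N + k) ≤ a - ε := by
      intro k
      induction k with
      | zero => simpa using (by linarith : x N ≤ a - ε)
      | succ k ih =>
        have h' := hN (N+k) (by omega)
        have hd : |x (N+k+1) - x (N+k)| < ε := h'.1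
        have h'' := hN (N+k+1) (by omega)
        have hlt : x (N+k+1) < a := by
          rw [abs_lt] at hd
          linarith [hd.2]
        have hfar : ε ≤ |x (N+k+1) - a| := not_lt.mp h''.2
        rw [le_abs] at hfar
        rcases hfar with h3 | h3
        · linarith
        · have : N + (k+1) = N + k + 1 := by omega
          rw [this]; linarith
    obtain ⟨n, hn1, hn2⟩ := (hfr2.and_eventually (eventually_ge_atTop N)).exists
    have := claim (n - N)
    rw [Nat.add_sub_cancel' hn2] at this
    linarith

section NR

variable {f : Sq ≃ₜ Sq}

lemma nr_snd (hf : NormallyRising f) (x : Sq) : ((f x).2 : ℝ) = f01 (x.2 : ℝ) := by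
  have h := hf.2 x.2
  have hx : f x ∈ (fun x : Sq => f x) '' {p : Sq | p.2 = x.2} :=
    ⟨x, rfl, rfl⟩
  rw [h] at hx
  exact hx

lemma nr_iter_snd (hf : NormallyRising f) (x : Sq) : ∀ n, ((f^[n] x).2 : ℝ) = f01^[n] (x.2 : ℝ) := by
  intro n
  induction n with
  | zero => rfl
  | succ n ih =>
    rw [Function.iterate_succ_apply', Function.iterate_succ_apply',
      nr_snd hf, ih]

/-- `f` preserves the order of first coordinates within a horizontal segment. -/
lemma nr_mono (hf : NormallyRising f) (t : Jt) {a b : Jt} (hab : a ≤ b) :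
    ((f (a, t)).1 : ℝ) ≤ ((f (b, t)).1 : ℝ) := by
  have hle : (-1 : ℝ) ≤ 1 := by norm_num
  set g : ℝ → ℝ := fun u => ((f (Set.projIcc (-1) 1 hle u, t)).1 : ℝ) with hg
  have hgc : Continuous g := by
    apply continuous_subtype_val.comp
    exact continuous_fst.comp (f.continuous.comp
      ((continuous_projIcc).prodMk continuous_const))
  have hgi : Set.InjOn g (Set.Icc (-1:ℝ) 1) := by
    intro u hu v hv huv
    simp only [hg, Set.projIcc_of_mem hle hu, Set.projIcc_of_mem hle hv] at huv
    have h2 : (f ((⟨u, hu⟩ : Jt), t)).2 = (f ((⟨v, hv⟩ : Jt), t)).2 := by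
      apply Subtype.ext
      rw [nr_snd hf, nr_snd hf]
    have h1 : (f ((⟨u, hu⟩ : Jt), t)).1 = (f ((⟨v, hv⟩ : Jt), t)).1 :=
      Subtype.ext huv
    have : f ((⟨u, hu⟩ : Jt), t) = f ((⟨v, hv⟩ : Jt), t) := Prod.ext h1 h2
    have := f.injective this
    exact congrArg (fun p : Sq => (p.1 : ℝ)) this
  have hm1 : (-1:ℝ) ∈ Set.Icc (-1:ℝ) 1 := by constructor <;> norm_num
  have hp1 : (1:ℝ) ∈ Set.Icc (-1:ℝ) 1 := by constructor <;> norm_num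
  have hgm1 : g (-1) = -1 := by
    simp only [hg, Set.projIcc_of_mem hle hm1]
    exact (hf.1 ((⟨-1, hm1⟩ : Jt), t) (Or.inl rfl)).1
  have hgp1 : g 1 = 1 := by
    simp only [hg, Set.projIcc_of_mem hle hp1]
    exact (hf.1 ((⟨1, hp1⟩ : Jt), t) (Or.inr (Or.inl rfl))).1
  have hsm : StrictMonoOn g (Set.Icc (-1:ℝ) 1) :=
    ContinuousOn.strictMonoOn_of_injOn_Icc hle (by rw [hgm1, hgp1]; norm_num)
      hgc.continuousOn hgi
  have hmono : MonotoneOn g (Set.Icc (-1:ℝ) 1) := hsm.monotoneOn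
  have := hmono a.2 b.2 hab
  simpa only [hg, Set.projIcc_of_mem hle a.2, Set.projIcc_of_mem hle b.2,
    Subtype.coe_eta] using this

end NR


lemma boundary_omega (f : Sq ≃ₜ Sq) (hf : NormallyRising f)
    (s : Jt) (hs : (s : ℝ) ∈ Set.Ioo (-1 : ℝ) 1)
    (c : ℝ) (hc : c ∈ Set.Icc (-1:ℝ) 1) (hcb : c = -1 ∨ c = 1)
    {h1 : (1:ℝ) ∈ Set.Icc (-1:ℝ) 1} :
    omegaSet (⇑f) ((⟨c, hc⟩ : Jt), s) = {((⟨c, hc⟩ : Jt), (⟨1, h1⟩ : Jt))} := by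
  set e : Jt := ⟨c, hc⟩ with he
  have httendsto : Tendsto (fun n => f01^[n] (s:ℝ)) atTop (𝓝 1) :=
    f01_iter_tendsto hs.1 hs.2.le
  have hts : ∀ n, ((f^[n] (e, s)).2 : ℝ) = f01^[n] (s:ℝ) := nr_iter_snd hf (e, s)
  have hfix : ∀ n, ((f^[n] (e, s)).1 : ℝ) = c := by
    intro n
    induction n with
    | zero => rfl
    | succ n ih =>
      rw [Function.iterate_succ_apply']
      have hb : ((f^[n] (e,s)).1 : ℝ) = -1 ∨ ((f^[n] (e,s)).1 : ℝ) = 1 := by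
        rcases hcb with h | h
        · exact Or.inl (by rw [ih, h])
        · exact Or.inr (by rw [ih, h])
      have := (hf.1 (f^[n] (e, s)) (by rcases hb with h | h; exacts [Or.inl h, Or.inr (Or.inl h)])).1
      rw [this, ih]
  ext y
  constructor
  · rintro ⟨φ, hφm, -, hten⟩
    have htop : Tendsto φ atTop atTop := hφm.tendsto_atTop
    have hy1 : Tendsto (fun i => ((f^[φ i] (e, s)).1 : ℝ)) atTop (𝓝 (y.1 : ℝ)) :=
      ((continuous_subtype_val.comp continuous_fst).tendsto y).comp hten
    have hy1' : (y.1 : ℝ) = c := by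
      have : (fun i => ((f^[φ i] (e, s)).1 : ℝ)) = fun _ => c := by
        funext i; exact hfix (φ i)
      rw [this] at hy1
      exact (tendsto_nhds_unique hy1 tendsto_const_nhds)
    have hy2 : Tendsto (fun i => ((f^[φ i] (e, s)).2 : ℝ)) atTop (𝓝 (y.2 : ℝ)) :=
      ((continuous_subtype_val.comp continuous_snd).tendsto y).comp hten
    have hy2' : (y.2 : ℝ) = 1 := by
      have heq : (fun i => ((f^[φ i] (e, s)).2 : ℝ)) = fun i => f01^[φ i] (s:ℝ) := by
        funext i; exact hts (φ i)
      rw [heq] at hy2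
      exact tendsto_nhds_unique hy2 (httendsto.comp htop)
    have : y = (y.1, y.2) := rfl
    rw [Set.mem_singleton_iff, this]
    exact Prod.ext (Subtype.ext hy1') (Subtype.ext hy2')
  · intro hy
    rw [Set.mem_singleton_iff] at hy
    subst hy
    refine ⟨fun i => i + 1, fun i j hij => Nat.succ_lt_succ hij,
      fun i => Nat.succ_pos i, ?_⟩
    rw [nhds_prod_eq, tendsto_prod_iff']
    constructor
    · rw [tendsto_subtype_rng]
      have : (fun i => ((f^[i+1] (e, s)).1 : ℝ)) = fun _ => c := by
        funext i; exact hfix (i+1)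
      rw [this]
      exact tendsto_const_nhds
    · rw [tendsto_subtype_rng]
      have : (fun i => ((f^[i+1] (e, s)).2 : ℝ)) = fun i => f01^[i+1] (s:ℝ) := by
        funext i; exact hts (i+1)
      rw [this]
      exact httendsto.comp (StrictMono.tendsto_atTop
        (show StrictMono (fun i : ℕ => i + 1) from fun i j hij => Nat.succ_lt_succ hij))

theorem stmt_19 (f : Sq ≃ₜ Sq) (hf : NormallyRising f)
    (s : Jt) (hs : (s : ℝ) ∈ Set.Ioo (-1 : ℝ) 1) :
    ∃ ξ₁ ξ₂ : Jt → ℝ, Monotone ξ₁ ∧ Monotone ξ₂ ∧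
      (∀ r : Jt, omegaSet (⇑f) (r, s) =
        {x : Sq | (x.1 : ℝ) ∈ Set.Icc (ξ₁ r) (ξ₂ r) ∧ (x.2 : ℝ) = 1}) ∧
      omegaSet (⇑f) ((⟨-1, by norm_num⟩ : Jt), s) =
        {((⟨-1, by norm_num⟩ : Jt), (⟨1, by norm_num⟩ : Jt))} ∧
      omegaSet (⇑f) ((⟨1, by norm_num⟩ : Jt), s) =
        {((⟨1, by norm_num⟩ : Jt), (⟨1, by norm_num⟩ : Jt))} := by
  classical
  set x : Jt → ℕ → ℝ := fun r n => ((f^[n] (r, s)).1 : ℝ) with hx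
  set t : ℕ → ℝ := fun n => f01^[n] (s : ℝ) with ht
  have hts : ∀ r n, ((f^[n] (r, s)).2 : ℝ) = t n := fun r n => nr_iter_snd hf (r, s) n
  have httendsto : Tendsto t atTop (𝓝 1) := f01_iter_tendsto hs.1 hs.2.le
  have hxmem : ∀ r n, x r n ∈ Set.Icc (-1:ℝ) 1 := fun r n => (f^[n] (r, s)).1.2
  -- the one-point at the top with a given first coordinate
  have hone : (1:ℝ) ∈ Set.Icc (-1:ℝ) 1 := by constructor <;> norm_num
  -- vanishing steps
  have hstep : ∀ r, ∀ ε > (0:ℝ), ∀ᶠ n in atTop, |x r (n+1) - x r n| < ε := by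
    intro r ε hε
    have huc : UniformContinuous (⇑f) :=
      CompactSpace.uniformContinuous_of_continuous f.continuous
    obtain ⟨δ, hδ, hδ'⟩ := Metric.uniformContinuous_iff.mp huc ε hε
    have hev : ∀ᶠ n in atTop, dist (t n) 1 < δ := by
      obtain ⟨N, hN⟩ := Metric.tendsto_atTop.mp httendsto δ hδ
      exact eventually_atTop.mpr ⟨N, hN⟩
    filter_upwards [hev] with n hn
    set p : Sq := f^[n] (r, s) with hp
    set q : Sq := (p.1, ⟨1, hone⟩) with hq
    have hdpq : dist p q < δ := by
      rw [Prod.dist_eq]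
      have h1 : dist p.1 q.1 = 0 := by simp [hq]
      have h2 : dist p.2 q.2 = dist (t n) 1 := by
        rw [Subtype.dist_eq]
        simp only [hq]
        rw [hts r n]
      rw [h1, h2]
      simp only [max_eq_right dist_nonneg]
      exact hn
    have hfq := hf.1 q (Or.inr (Or.inr (Or.inr rfl)))
    have hfq1 : ((f q).1 : ℝ) = (p.1 : ℝ) := hfq.1
    have key : dist ((f p).1 : ℝ) ((f q).1 : ℝ) < ε := by
      have hle : dist ((f p).1 : ℝ) ((f q).1 : ℝ) ≤ dist (f p) (f q) := by
        rw [← Subtype.dist_eq, Prod.dist_eq]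
        exact le_max_left _ _
      exact lt_of_le_of_lt hle (hδ' hdpq)
    have hsucc : x r (n+1) = ((f p).1 : ℝ) := by
      simp only [hx, hp, Function.iterate_succ_apply']
    rw [Real.dist_eq, hfq1] at key
    rw [hsucc]
    exact key
  -- comparison
  have hcmp : ∀ a b : Jt, a ≤ b → ∀ n, x a n ≤ x b n := by
    intro a b hab n
    induction n with
    | zero => exact hab
    | succ n ih =>
      set p : Sq := f^[n] (a, s) with hp
      set q : Sq := f^[n] (b, s) with hq
      have hpq2 : p.2 = q.2 := by
        apply Subtype.ext
        rw [hts a n, hts b n]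
      have h1 : p.1 ≤ q.1 := ih
      have := nr_mono hf p.2 h1
      have hx1 : x a (n+1) = ((f (p.1, p.2)).1 : ℝ) := by
        simp only [hx, hp, Function.iterate_succ_apply']
      have hx2 : x b (n+1) = ((f (q.1, p.2)).1 : ℝ) := by
        simp only [hx, hq, Function.iterate_succ_apply', hpq2]
      rw [hx1, hx2]
      exact this
  have hbdd : ∀ r, IsBoundedUnder (· ≤ ·) atTop (x r) :=
    fun r => isBoundedUnder_of ⟨1, fun n => (hxmem r n).2⟩
  have hbdd' : ∀ r, IsBoundedUnder (· ≥ ·) atTop (x r) :=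
    fun r => isBoundedUnder_of ⟨-1, fun n => (hxmem r n).1⟩
  refine ⟨fun r => liminf (x r) atTop, fun r => limsup (x r) atTop, ?_, ?_, ?_, ?_, ?_⟩
  · -- Monotone ξ₁
    intro a b hab
    exact liminf_le_liminf (Eventually.of_forall (hcmp a b hab)) (hbdd' a)
      ((hbdd b).isCoboundedUnder_ge)
  · intro a b hab
    exact limsup_le_limsup (Eventually.of_forall (hcmp a b hab))
      ((hbdd' a).isCoboundedUnder_le) (hbdd b)
  · -- main description
    intro r
    ext y
    constructor
    · rintro ⟨φ, hφm, -, hten⟩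
      have htop : Tendsto φ atTop atTop := hφm.tendsto_atTop
      have h1 : Tendsto (fun i => x r (φ i)) atTop (𝓝 (y.1 : ℝ)) :=
        ((continuous_subtype_val.comp continuous_fst).tendsto y).comp hten
      have h2 : Tendsto (fun i => ((f^[φ i] (r, s)).2 : ℝ)) atTop (𝓝 (y.2 : ℝ)) :=
        ((continuous_subtype_val.comp continuous_snd).tendsto y).comp hten
      have h2' : Tendsto (fun i => ((f^[φ i] (r, s)).2 : ℝ)) atTop (𝓝 1) := by
        have : (fun i => ((f^[φ i] (r, s)).2 : ℝ)) = fun i => t (φ i) := by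
          funext i; exact hts r (φ i)
        rw [this]
        exact httendsto.comp htop
      have hy2 : (y.2 : ℝ) = 1 := tendsto_nhds_unique h2 h2'
      have hle1 : liminf (x r) atTop ≤ (y.1 : ℝ) := by
        by_contra hcon
        push_neg at hcon
        set ε := (liminf (x r) atTop - (y.1:ℝ))/2 with hε
        have hεpos : 0 < ε := by simp only [hε]; linarith
        have hfr : ∃ᶠ n in atTop, x r n ≤ (y.1:ℝ) + ε :=
          htop.frequently ((h1.eventually_lt_const (by linarith : (y.1:ℝ) < (y.1:ℝ) + ε)).mono
            (fun i h => h.le)).frequently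
        have := liminf_le_of_frequently_le hfr (hbdd' r)
        simp only [hε] at this
        linarith
      have hle2 : (y.1 : ℝ) ≤ limsup (x r) atTop := by
        by_contra hcon
        push_neg at hcon
        set ε := ((y.1:ℝ) - limsup (x r) atTop)/2 with hε
        have hεpos : 0 < ε := by simp only [hε]; linarith
        have hfr : ∃ᶠ n in atTop, (y.1:ℝ) - ε ≤ x r n :=
          htop.frequently ((h1.eventually_const_lt (by linarith : (y.1:ℝ) - ε < (y.1:ℝ))).mono
            (fun i h => h.le)).frequently
        have := le_limsup_of_frequently_le hfr (hbdd r)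
        simp only [hε] at this
        linarith
      exact ⟨⟨hle1, hle2⟩, hy2⟩
    · rintro ⟨⟨hy1, hy2⟩, hytop⟩
      set a : ℝ := (y.1 : ℝ) with hadef
      have hfreq : ∀ n : ℕ, ∃ᶠ k in atTop, |x r k - a| < 1/(n+1) := by
        intro n
        exact freq_near (hxmem r) (hstep r) hy1 hy2 (by positivity)
      obtain ⟨φ, hφm, hφP⟩ := extraction_forall_of_frequently hfreq
      refine ⟨fun i => φ (i+1), fun i j hij => hφm (by omega), fun i => ?_, ?_⟩
      · exact Nat.lt_of_lt_of_le (Nat.succ_pos i) hφm.le_apply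
      · have hy : y = (y.1, y.2) := rfl
        rw [hy, nhds_prod_eq, tendsto_prod_iff']
        constructor
        · rw [tendsto_subtype_rng]
          have hten1 : Tendsto (fun i => x r (φ (i+1))) atTop (𝓝 a) := by
            rw [Metric.tendsto_atTop]
            intro ε hε
            obtain ⟨N, hN⟩ := exists_nat_one_div_lt hε
            refine ⟨N, fun i hi => ?_⟩
            have h3 := hφP (i+1)
            push_cast at h3
            have h4 : (1:ℝ)/(i+1+1) ≤ 1/(N+1) := by
              apply one_div_le_one_div_of_le (by positivity)
              have : (N:ℝ) ≤ i := by exact_mod_cast hi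
              linarith
            rw [Real.dist_eq]
            calc |x r (φ (i+1)) - a| < 1/(i+1+1) := h3
              _ ≤ 1/(N+1) := h4
              _ < ε := hN
          exact hten1
        · rw [tendsto_subtype_rng]
          have : (fun i => ((f^[φ (i+1)] (r, s)).2 : ℝ)) = fun i => t (φ (i+1)) := by
            funext i; exact hts r (φ (i+1))
          rw [hytop, this]
          exact httendsto.comp ((hφm.comp (fun i j hij => Nat.succ_lt_succ hij : StrictMono
            (fun i : ℕ => i + 1))).tendsto_atTop)
  · -- endpoints
    exact boundary_omega f hf s hs (-1) (by constructor <;> norm_num) (Or.inl rfl)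
  · exact boundary_omega f hf s hs 1 (by constructor <;> norm_num) (Or.inr rfl)
end
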